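/- arXiv:1506.01064 — 6 statements merged into one kernel-verified Lean document; each statement's English description precedes it below -/
import Mathlib

section
/- Let a, b, c be positive real numbers. Then the matrices B(a,b,c) and T(a,b,c) commute entrywise: for all j, k ∈ ℤ≥0, −sqrt(j(j+a−1)(j+b−1)(j+c−1))·B(a,b,c)_{j−1,k} + (j(j+c−1)+(j+a)(j+b))·B(a,b,c)_{j,k} − sqrt((j+1)(j+a)(j+b)(j+c))·B(a,b,c)_{j+1,k} = −sqrt(k(k+a−1)(k+b−1)(k+c−1))·B(a,b,c)_{j,k−1} + (k(k+c−1)+(k+a)(k+b))·B(a,b,c)_{j,k} − sqrt((k+1)(k+a)(k+b)(k+c))·B(a,b,c)_{j,k+1}, where terms containing an index −1 are interpreted as 0. -/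
/-- The entries of the weighted Hankel matrix `B(a,b,c)`. -/
noncomputable def Bent (a b c : ℝ) (j k : ℕ) : ℝ :=
  (Real.Gamma ((j : ℝ) + k + a) / Real.Gamma ((j : ℝ) + k + b + c)) *
    Real.sqrt (Real.Gamma ((j : ℝ) + b) * Real.Gamma ((j : ℝ) + c) *
        Real.Gamma ((k : ℝ) + b) * Real.Gamma ((k : ℝ) + c) /
      (Real.Gamma ((j : ℝ) + a) * (Nat.factorial j) *
        Real.Gamma ((k : ℝ) + a) * (Nat.factorial k)))

/-!
Write `B_{jk} = g(j+k) w_j w_k` with `g n = Γ(n+a)/Γ(n+b+c)`. The off-diagonal entries of `T`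
move the weights `w` up and down by rational factors, so `(T B)_{jk} = K(j, j+k) w_j w_k` for
an explicit kernel `K(x, n)` built from `g(n-1), g(n), g(n+1)`. As `B` is symmetric,
`(B T)_{jk} = (T B)_{kj}`, so the theorem reduces to the symmetry `K(x, n) = K(n-x, n)`,
a rational identity once the three values of `g` are related by the functional equation of `Γ`.
-/

open Real
open scoped Nat

namespace JacobiHankel

variable (a b c : ℝ)

noncomputable def gammaRatio (n : ℝ) : ℝ := Gamma (n + a) / Gamma (n + b + c)

noncomputable def weight (j : ℕ) : ℝ :=
  √(Gamma (j + b) * Gamma (j + c) / (Gamma (j + a) * j !))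

/-- `(T(a,b,c) f)_j`. -/
noncomputable def jacobiApply (f : ℕ → ℝ) (j : ℕ) : ℝ :=
  (if j = 0 then 0 else
      -√((j : ℝ) * ((j : ℝ) + a - 1) * ((j : ℝ) + b - 1) * ((j : ℝ) + c - 1)) * f (j - 1))
    + ((j : ℝ) * ((j : ℝ) + c - 1) + ((j : ℝ) + a) * ((j : ℝ) + b)) * f j
    - √(((j : ℝ) + 1) * ((j : ℝ) + a) * ((j : ℝ) + b) * ((j : ℝ) + c)) * f (j + 1)

noncomputable def kernel (x n : ℝ) : ℝ :=
  -(x * (x + a - 1)) * gammaRatio a b c (n - 1)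
    + (x * (x + c - 1) + (x + a) * (x + b)) * gammaRatio a b c n
    - (x + b) * (x + c) * gammaRatio a b c (n + 1)

theorem gammaRatio_add_one {n : ℝ} (ha : n + a ≠ 0) (hbc : n + b + c ≠ 0) :
    gammaRatio a b c (n + 1) = (n + a) / (n + b + c) * gammaRatio a b c n := by
  rw [gammaRatio, gammaRatio, add_right_comm n 1, add_right_comm n 1, add_right_comm (n + b) 1,
    Gamma_add_one ha, Gamma_add_one hbc, mul_div_mul_comm]

theorem kernel_sub_left {n : ℝ} (ha : 0 < n - 1 + a) (hbc : 0 < n - 1 + b + c) (x : ℝ) :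
    kernel a b c x n = kernel a b c (n - x) n := by
  have hpred : gammaRatio a b c n
      = (n - 1 + a) / (n - 1 + b + c) * gammaRatio a b c (n - 1) := by
    simpa using gammaRatio_add_one a b c ha.ne' hbc.ne'
  have hsucc := gammaRatio_add_one a b c (n := n) (by linarith) (by linarith)
  have : n + b + c ≠ 0 := by linarith
  rw [kernel, kernel, hsucc, hpred]
  field_simp
  ring

variable {a b c}

theorem Bent_comm (j k : ℕ) : Bent a b c j k = Bent a b c k j := by
  simp only [Bent, add_comm (j : ℝ) k]
  ring_nf

theorem Bent_eq_gammaRatio_mul_weight (ha : 0 < a) (hb : 0 < b) (hc : 0 < c) (j k : ℕ) :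
    Bent a b c j k = gammaRatio a b c (j + k) * (weight a b c j * weight a b c k) := by
  have : 0 ≤ Gamma (j + b) * Gamma (j + c) / (Gamma (j + a) * j !) := by
    have := Gamma_pos_of_pos (by positivity : (0 : ℝ) < j + a)
    have := Gamma_pos_of_pos (by positivity : (0 : ℝ) < j + b)
    have := Gamma_pos_of_pos (by positivity : (0 : ℝ) < j + c)
    positivity
  rw [Bent, gammaRatio, weight, weight, ← sqrt_mul this, div_mul_div_comm]
  ring_nf

theorem sqrt_mul_weight_succ (ha : 0 < a) (hb : 0 < b) (hc : 0 < c) (j : ℕ) :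
    √((j + 1) * (j + a)) * weight a b c (j + 1) = √((j + b) * (j + c)) * weight a b c j := by
  have := Gamma_pos_of_pos (by positivity : (0 : ℝ) < j + a)
  have := Gamma_pos_of_pos (by positivity : (0 : ℝ) < j + b)
  have := Gamma_pos_of_pos (by positivity : (0 : ℝ) < j + c)
  rw [weight, weight, ← sqrt_mul (by positivity), ← sqrt_mul (by positivity)]
  congr 1
  push_cast
  rw [add_right_comm _ 1 a, add_right_comm _ 1 b, add_right_comm _ 1 c,
    Gamma_add_one (by positivity), Gamma_add_one (by positivity), Gamma_add_one (by positivity),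
    Nat.factorial_succ]
  push_cast
  field_simp

theorem sqrt_hop_eq (ha : 0 < a) (j : ℕ) :
    √((j + 1) * (j + a) * (j + b) * (j + c))
      = √((j + 1) * (j + a)) * √((j + b) * (j + c)) := by
  rw [← sqrt_mul (by positivity), mul_assoc _ ((j : ℝ) + b)]

theorem sqrt_hop_mul_weight_succ (ha : 0 < a) (hb : 0 < b) (hc : 0 < c) (j : ℕ) :
    √((j + 1) * (j + a) * (j + b) * (j + c)) * weight a b c (j + 1)
      = (j + b) * (j + c) * weight a b c j := by
  rw [sqrt_hop_eq ha, mul_right_comm, sqrt_mul_weight_succ ha hb hc, mul_right_comm,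
    mul_self_sqrt (by positivity)]

theorem sqrt_hop_mul_weight (ha : 0 < a) (hb : 0 < b) (hc : 0 < c) (j : ℕ) :
    √((j + 1) * (j + a) * (j + b) * (j + c)) * weight a b c j
      = (j + 1) * (j + a) * weight a b c (j + 1) := by
  rw [sqrt_hop_eq ha, mul_assoc, ← sqrt_mul_weight_succ ha hb hc, ← mul_assoc,
    mul_self_sqrt (by positivity)]

theorem jacobiApply_Bent (ha : 0 < a) (hb : 0 < b) (hc : 0 < c) (j k : ℕ) :
    jacobiApply a b c (Bent a b c · k) j
      = kernel a b c j (j + k) * (weight a b c j * weight a b c k) := by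
  simp only [Bent_eq_gammaRatio_mul_weight ha hb hc]
  cases j with
  | zero =>
    have up := sqrt_hop_mul_weight_succ ha hb hc 0
    simp only [jacobiApply, kernel, if_pos]
    push_cast at up ⊢
    rw [show (1 : ℝ) + k = 0 + k + 1 by ring]
    linear_combination (-gammaRatio a b c (0 + k + 1) * weight a b c k) * up
  | succ m =>
    have down := sqrt_hop_mul_weight ha hb hc m
    have up := sqrt_hop_mul_weight_succ ha hb hc (m + 1)
    simp only [jacobiApply, kernel, Nat.add_one_ne_zero, if_false, Nat.add_sub_cancel]
    push_cast at up down ⊢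
    rw [show ((m : ℝ) + 1) * (m + 1 + a - 1) * (m + 1 + b - 1) * (m + 1 + c - 1)
          = (m + 1) * (m + a) * (m + b) * (m + c) by ring,
      show (m : ℝ) + 1 + k - 1 = m + k by ring,
      show (m : ℝ) + 1 + 1 + k = m + 1 + k + 1 by ring]
    linear_combination (-gammaRatio a b c (m + k) * weight a b c k) * down
      - (gammaRatio a b c (m + 1 + k + 1) * weight a b c k) * up

end JacobiHankel

open JacobiHankel

/-- The Jacobi matrix `T(a,b,c)` commutes with `B(a,b,c)`, entrywise. -/
theorem jacobi_commutes (a b c : ℝ) (ha : 0 < a) (hb : 0 < b) (hc : 0 < c) (j k : ℕ) :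
    (if j = 0 then 0 else
        -Real.sqrt ((j : ℝ) * ((j : ℝ) + a - 1) * ((j : ℝ) + b - 1) * ((j : ℝ) + c - 1)) *
          Bent a b c (j - 1) k)
      + ((j : ℝ) * ((j : ℝ) + c - 1) + ((j : ℝ) + a) * ((j : ℝ) + b)) * Bent a b c j k
      - Real.sqrt (((j : ℝ) + 1) * ((j : ℝ) + a) * ((j : ℝ) + b) * ((j : ℝ) + c)) *
          Bent a b c (j + 1) k
    = (if k = 0 then 0 else
        -Real.sqrt ((k : ℝ) * ((k : ℝ) + a - 1) * ((k : ℝ) + b - 1) * ((k : ℝ) + c - 1)) *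
          Bent a b c j (k - 1))
      + ((k : ℝ) * ((k : ℝ) + c - 1) + ((k : ℝ) + a) * ((k : ℝ) + b)) * Bent a b c j k
      - Real.sqrt (((k : ℝ) + 1) * ((k : ℝ) + a) * ((k : ℝ) + b) * ((k : ℝ) + c)) *
          Bent a b c j (k + 1) := by
  change jacobiApply a b c (Bent a b c · k) j = jacobiApply a b c (Bent a b c j ·) k
  simp only [Bent_comm j]
  rw [jacobiApply_Bent ha hb hc, jacobiApply_Bent ha hb hc, add_comm (k : ℝ),
    mul_comm (weight a b c k)]
  rcases Nat.eq_zero_or_pos (j + k) with hjk | hjk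
  · obtain ⟨rfl, rfl⟩ : j = 0 ∧ k = 0 := by omega
    rfl
  · have hjk : (1 : ℝ) ≤ j + k := by exact_mod_cast hjk
    rw [kernel_sub_left a b c (by linarith) (by linarith) (j : ℝ), add_sub_cancel_left]
end

section
/- Let a, b, c be real numbers satisfying 0 < b < c and 0 < a < c − b, and let Bop be a bounded linear operator on ℓ² representing B(a,b,c). Then the operator norm of Bop equals Γ(b)Γ(c−a)/Γ(b+c−a). -/
/-- The sequence space `ℓ²(ℤ≥0, ℂ)`. -/
noncomputable abbrev l2 : Type := lp (fun _ : ℕ => ℂ) 2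

/-- A bounded operator on `ℓ²` represents the matrix `B(a,b,c)` if its matrix elements
with respect to the standard orthonormal basis are the entries of `B(a,b,c)`. -/
def Represents (a b c : ℝ) (Bop : l2 →L[ℂ] l2) : Prop :=
  ∀ j k : ℕ,
    (inner ℂ (lp.single 2 j (1 : ℂ)) (Bop (lp.single 2 k (1 : ℂ))) : ℂ) = (Bent a b c j k : ℂ)

/-! The vector `p j = √(Γ(j+a)Γ(j+b)/(Γ(j+c) j!))` lies in `ℓ²` and satisfies `B p = λ p` with
`λ = Γ(b)Γ(c-a)/Γ(b+c-a)`: each row sum `∑ₖ B j k * p k` is a Gauss sum `₂F₁(j+a, b; j+b+c; 1)`.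
This gives `λ ≤ ‖B‖`. Conversely, `B` is symmetric with nonnegative entries, so the Schur test with
the weight `p` gives `‖B‖ ≤ λ`. -/

open MeasureTheory Set Real
open scoped ENNReal NNReal Nat

theorem MeasureTheory.hasSum_integral_of_nonneg {α ι : Type*} [Countable ι] [MeasurableSpace α]
    {μ : Measure α} {F : ι → α → ℝ} {f : α → ℝ} (hF_meas : ∀ n, AEStronglyMeasurable (F n) μ)
    (hF_nonneg : ∀ n, 0 ≤ᵐ[μ] F n) (hf : Integrable f μ)
    (h_lim : ∀ᵐ a ∂μ, HasSum (fun n => F n a) (f a)) :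
    HasSum (fun n => ∫ a, F n a ∂μ) (∫ a, f a ∂μ) := by
  refine hasSum_integral_of_dominated_convergence F hF_meas (fun n => ?_) ?_ ?_ h_lim
  · filter_upwards [hF_nonneg n] with a ha
    rw [Real.norm_of_nonneg ha]
  · filter_upwards [h_lim] with a ha using ha.summable
  · exact hf.congr (by filter_upwards [h_lim] with a ha using ha.tsum_eq.symm)

theorem Real.lintegral_rpow_mul_one_sub_rpow {u v : ℝ} (hu : 0 < u) (hv : 0 < v) :
    ∫⁻ t in Ioo (0:ℝ) 1, ENNReal.ofReal (t ^ (u - 1) * (1 - t) ^ (v - 1)) =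
      ENNReal.ofReal (Gamma u * Gamma v / Gamma (u + v)) := by
  have hB := ProbabilityTheory.beta_pos hu hv
  have h := ProbabilityTheory.lintegral_betaPDF_eq_one hu hv
  simp_rw [ProbabilityTheory.lintegral_betaPDF, mul_assoc,
    ENNReal.ofReal_mul (one_div_pos.2 hB).le] at h
  rw [lintegral_const_mul' _ _ ENNReal.ofReal_ne_top, mul_comm] at h
  rw [ENNReal.eq_inv_of_mul_eq_one_left h, one_div, ENNReal.ofReal_inv_of_pos hB, inv_inv]
  rfl

theorem Real.integral_rpow_mul_one_sub_rpow {u v : ℝ} (hu : 0 < u) (hv : 0 < v) :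
    ∫ t in Ioo (0:ℝ) 1, t ^ (u - 1) * (1 - t) ^ (v - 1) = Gamma u * Gamma v / Gamma (u + v) := by
  rw [integral_eq_lintegral_of_nonneg_ae, lintegral_rpow_mul_one_sub_rpow hu hv,
    ENNReal.toReal_ofReal (by positivity)]
  · filter_upwards [ae_restrict_mem measurableSet_Ioo] with t ⟨ht₀, ht₁⟩
    have : 0 < 1 - t := sub_pos.2 ht₁
    positivity
  · fun_prop

/-- Expand `exp (t * s)` inside `∫ s ^ (β - 1) * exp (-((1 - t) * s)) = Γ(β) (1 - t) ^ (-β)`. -/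
theorem Real.hasSum_Gamma_add_div_factorial_mul_pow {β t : ℝ} (hβ : 0 < β) (ht₀ : 0 ≤ t)
    (ht₁ : t < 1) :
    HasSum (fun k : ℕ => Gamma (k + β) / k ! * t ^ k) (Gamma β * (1 - t) ^ (-β)) := by
  have h1t : 0 < 1 - t := sub_pos.2 ht₁
  have hlim : ∀ s ∈ Ioi (0:ℝ), HasSum (fun k : ℕ => exp (-s) * s ^ ((k + β) - 1) * (t ^ k / k !))
      (s ^ (β - 1) * exp (-((1 - t) * s))) := by
    intro s (hs : 0 < s)
    have hterm (k : ℕ) : exp (-s) * s ^ ((k + β) - 1) * (t ^ k / k !) =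
        exp (-s) * s ^ (β - 1) * ((t * s) ^ k / k !) := by
      rw [show (k : ℝ) + β - 1 = β - 1 + k by ring, rpow_add hs, rpow_natCast, mul_pow]
      ring
    have hval : s ^ (β - 1) * exp (-((1 - t) * s)) = exp (-s) * s ^ (β - 1) * exp (t * s) := by
      rw [show -((1 - t) * s) = -s + t * s by ring, exp_add]
      ring
    have hexp : HasSum (fun k : ℕ => (t * s) ^ k / k !) (exp (t * s)) := by
      rw [exp_eq_exp_ℝ]
      exact NormedSpace.expSeries_div_hasSum_exp _
    simp only [hterm, hval]
    exact hexp.mul_left _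
  have hint : ∫ s in Ioi (0:ℝ), s ^ (β - 1) * exp (-((1 - t) * s)) = (1 / (1 - t)) ^ β * Gamma β :=
    integral_rpow_mul_exp_neg_mul_Ioi hβ h1t
  have key := hasSum_integral_of_nonneg (μ := volume.restrict (Ioi 0))
    (F := fun (k : ℕ) s => exp (-s) * s ^ ((k + β) - 1) * (t ^ k / k !)) (fun k => by fun_prop)
    (fun k => ae_restrict_of_forall_mem measurableSet_Ioi fun s (hs : 0 < s) => by positivity)
    (.of_integral_ne_zero (by rw [hint]; positivity))
    (ae_restrict_of_forall_mem measurableSet_Ioi hlim)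
  simp only [integral_mul_const, hint] at key
  convert key using 1
  · ext k
    rw [← Gamma_eq_integral (by positivity)]
    ring
  · rw [one_div, inv_rpow h1t.le, ← rpow_neg h1t.le]
    ring

/-- Gauss's summation theorem for `₂F₁(x, β; y; 1)`, via Euler's integral: `Γ(k+x)/Γ(k+y)` is a
beta integral, under which the binomial series sums to `Γ(β) (1 - t) ^ (-β)`. -/
theorem Real.hasSum_Gamma_mul_Gamma_div_Gamma_mul_factorial {x β y : ℝ} (hx : 0 < x)
    (hβ : 0 < β) (hxy : x + β < y) :
    HasSum (fun k : ℕ => Gamma (k + x) * Gamma (k + β) / (Gamma (k + y) * k !))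
      (Gamma x * Gamma β * Gamma (y - x - β) / (Gamma (y - x) * Gamma (y - β))) := by
  have hyx : 0 < y - x := by linarith
  have hyxβ : 0 < y - x - β := by linarith
  have hlim : ∀ t ∈ Ioo (0:ℝ) 1,
      HasSum (fun k : ℕ => t ^ (k + x - 1) * (1 - t) ^ (y - x - 1) * (Gamma (k + β) / k !))
        (Gamma β * (t ^ (x - 1) * (1 - t) ^ (y - x - β - 1))) := by
    intro t ⟨ht₀, ht₁⟩
    have h1t : 0 < 1 - t := sub_pos.2 ht₁
    have hterm (k : ℕ) : t ^ (k + x - 1) * (1 - t) ^ (y - x - 1) * (Gamma (k + β) / k !) =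
        t ^ (x - 1) * (1 - t) ^ (y - x - 1) * (Gamma (k + β) / k ! * t ^ k) := by
      rw [show (k : ℝ) + x - 1 = x - 1 + k by ring, rpow_add ht₀, rpow_natCast]
      ring
    have hval : Gamma β * (t ^ (x - 1) * (1 - t) ^ (y - x - β - 1)) =
        t ^ (x - 1) * (1 - t) ^ (y - x - 1) * (Gamma β * (1 - t) ^ (-β)) := by
      rw [show y - x - β - 1 = y - x - 1 + -β by ring, rpow_add h1t]
      ring
    simp only [hterm, hval]
    exact (hasSum_Gamma_add_div_factorial_mul_pow hβ ht₀.le ht₁).mul_left _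
  have hint : ∫ t in Ioo (0:ℝ) 1, Gamma β * (t ^ (x - 1) * (1 - t) ^ (y - x - β - 1)) =
      Gamma β * (Gamma x * Gamma (y - x - β) / Gamma (x + (y - x - β))) := by
    rw [integral_const_mul, integral_rpow_mul_one_sub_rpow hx hyxβ]
  have key := hasSum_integral_of_nonneg (μ := volume.restrict (Ioo 0 1))
    (F := fun (k : ℕ) t => t ^ (k + x - 1) * (1 - t) ^ (y - x - 1) * (Gamma (k + β) / k !))
    (fun k => by fun_prop)
    (fun k => ae_restrict_of_forall_mem measurableSet_Ioo fun t ⟨ht₀, ht₁⟩ => by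
      have : 0 < 1 - t := sub_pos.2 ht₁
      positivity)
    (.of_integral_ne_zero (by rw [hint]; positivity))
    (ae_restrict_of_forall_mem measurableSet_Ioo hlim)
  simp only [integral_mul_const, hint] at key
  have hterm (k : ℕ) : Gamma (k + x) * Gamma (k + β) / (Gamma (k + y) * k !) =
      (∫ t in Ioo (0:ℝ) 1, t ^ (k + x - 1) * (1 - t) ^ (y - x - 1)) * (Gamma (k + β) / k !) /
        Gamma (y - x) := by
    rw [integral_rpow_mul_one_sub_rpow (by positivity) hyx,
      show (k : ℝ) + x + (y - x) = k + y by ring]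
    field_simp
  have hval : Gamma x * Gamma β * Gamma (y - x - β) / (Gamma (y - x) * Gamma (y - β)) =
      Gamma β * (Gamma x * Gamma (y - x - β) / Gamma (x + (y - x - β))) / Gamma (y - x) := by
    rw [show x + (y - x - β) = y - β by ring]
    field_simp
  simp only [hterm, hval]
  exact key.div_const _

theorem ENNReal.sq_tsum_mul_le {ι : Type*} (w f : ι → ℝ≥0∞) :
    (∑' i, w i * f i) ^ 2 ≤ (∑' i, w i) * ∑' i, w i * f i ^ 2 := by
  have key : ∑' i, w i * f i ≤
      (∑' i, w i) ^ (2⁻¹ : ℝ) * (∑' i, w i * f i ^ 2) ^ (2⁻¹ : ℝ) := by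
    rw [ENNReal.tsum_eq_iSup_sum]
    refine iSup_le fun s => ?_
    calc ∑ i ∈ s, w i * f i
        ≤ (∑ i ∈ s, w i) ^ (1 - (2:ℝ)⁻¹) * (∑ i ∈ s, w i * f i ^ (2:ℝ)) ^ (2:ℝ)⁻¹ :=
          inner_le_weight_mul_Lp_of_nonneg s one_le_two w f
      _ ≤ _ := by
          rw [show (1:ℝ) - 2⁻¹ = 2⁻¹ by norm_num]
          simp only [ENNReal.rpow_two]
          gcongr <;> exact ENNReal.sum_le_tsum s
  calc _ ≤ ((∑' i, w i) ^ (2⁻¹ : ℝ) * (∑' i, w i * f i ^ 2) ^ (2⁻¹ : ℝ)) ^ 2 := by gcongr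
    _ = _ := by
      rw [mul_pow, ← ENNReal.rpow_two, ← ENNReal.rpow_two, ENNReal.rpow_inv_rpow two_ne_zero,
        ENNReal.rpow_inv_rpow two_ne_zero]

/-- Each row is estimated by Cauchy–Schwarz with the weights `K j k * q k`. -/
theorem ENNReal.tsum_sq_le_of_schur {ι κ : Type*} {K : ι → κ → ℝ≥0∞} {p : ι → ℝ≥0∞}
    {q : κ → ℝ≥0∞} {α β : ℝ≥0∞} (hq₀ : ∀ k, q k ≠ 0) (hq_top : ∀ k, q k ≠ ∞)
    (hrow : ∀ j, ∑' k, K j k * q k ≤ α * p j) (hcol : ∀ k, ∑' j, K j k * p j ≤ β * q k)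
    (x : κ → ℝ≥0∞) :
    ∑' j, (∑' k, K j k * x k) ^ 2 ≤ α * β * ∑' k, x k ^ 2 := by
  have hq_div (k) : q k * (x k / q k) = x k := ENNReal.mul_div_cancel (hq₀ k) (hq_top k)
  have hrow_sq (j) : (∑' k, K j k * x k) ^ 2 ≤ α * p j * ∑' k, K j k * (x k * (x k / q k)) :=
    calc (∑' k, K j k * x k) ^ 2 = (∑' k, K j k * q k * (x k / q k)) ^ 2 := by
          simp only [mul_assoc, hq_div]
      _ ≤ (∑' k, K j k * q k) * ∑' k, K j k * q k * (x k / q k) ^ 2 := sq_tsum_mul_le _ _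
      _ = (∑' k, K j k * q k) * ∑' k, K j k * (x k * (x k / q k)) := by
          simp only [pow_two, mul_assoc, ← mul_assoc (q _), hq_div]
      _ ≤ α * p j * ∑' k, K j k * (x k * (x k / q k)) := by gcongr; exact hrow j
  calc ∑' j, (∑' k, K j k * x k) ^ 2
      ≤ ∑' j, α * p j * ∑' k, K j k * (x k * (x k / q k)) := ENNReal.tsum_le_tsum hrow_sq
    _ = α * ∑' j, ∑' k, K j k * p j * (x k * (x k / q k)) := by
        simp only [mul_assoc, ← ENNReal.tsum_mul_left]
        exact tsum_congr fun j => tsum_congr fun k => by ring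
    _ = α * ∑' k, (∑' j, K j k * p j) * (x k * (x k / q k)) := by
        simp only [ENNReal.tsum_comm (α := ι), ENNReal.tsum_mul_right]
    _ ≤ α * ∑' k, β * q k * (x k * (x k / q k)) := by gcongr with k; exact hcol k
    _ = α * β * ∑' k, x k ^ 2 := by
        simp only [mul_assoc, mul_left_comm (q _), hq_div, ENNReal.tsum_mul_left, pow_two]

theorem ContinuousLinearMap.norm_le_opNorm_of_apply_eq_smul {𝕜 E : Type*}
    [NontriviallyNormedField 𝕜] [NormedAddCommGroup E] [NormedSpace 𝕜 E] (T : E →L[𝕜] E) {v : E} (hv : v ≠ 0) {c : 𝕜}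
    (h : T v = c • v) : ‖c‖ ≤ ‖T‖ := by
  have := T.le_opNorm v
  rw [h, norm_smul] at this
  exact le_of_mul_le_mul_right this (norm_pos_iff.2 hv)

section SchurTest

variable {𝕜 ι : Type*} [RCLike 𝕜]

local notation "ℓ²" => lp (fun _ : ι => 𝕜) 2

theorem lp.tsum_enorm_sq (x : ℓ²) : ∑' k, ‖x k‖ₑ ^ 2 = ‖x‖ₑ ^ 2 := by
  have h := lp.hasSum_norm (p := 2) (by norm_num) x
  simp only [ENNReal.toReal_ofNat, Real.rpow_two] at h
  simp only [← ofReal_norm, ← ENNReal.ofReal_pow (norm_nonneg _)]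
  rw [← ENNReal.ofReal_tsum_of_nonneg (fun k => by positivity) h.summable, h.tsum_eq]

variable [DecidableEq ι]

theorem lp.hasSum_inner_single_mul_apply (T : ℓ² →L[𝕜] ℓ²) (x : ℓ²) (j : ι) :
    HasSum (fun k => inner 𝕜 (lp.single 2 j 1) (T (lp.single 2 k 1)) * x k) (T x j) := by
  have h := ((lp.hasSum_single (by norm_num) x).mapL T).mapL
    (innerSL 𝕜 (lp.single 2 j (1 : 𝕜)))
  have hsingle (k : ι) : lp.single (E := fun _ : ι => 𝕜) 2 k (x k) = x k • lp.single 2 k 1 := by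
    rw [← lp.single_smul, smul_eq_mul, mul_one]
  simpa [hsingle, inner_smul_right, lp.inner_single_left, mul_comm] using h

theorem ContinuousLinearMap.opNorm_le_of_schur {T : ℓ² →L[𝕜] ℓ²} {K : ι → ι → ℝ≥0∞}
    {p : ι → ℝ≥0∞} {C : ℝ≥0}
    (hK : ∀ j k, ‖inner 𝕜 (lp.single 2 j 1) (T (lp.single 2 k 1))‖ₑ ≤ K j k)
    (hp₀ : ∀ k, p k ≠ 0) (hp_top : ∀ k, p k ≠ ∞)
    (hrow : ∀ j, ∑' k, K j k * p k ≤ C * p j) (hcol : ∀ k, ∑' j, K j k * p j ≤ C * p k) :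
    ‖T‖ ≤ C := by
  refine NNReal.coe_le_coe.2 (T.opNNNorm_le_bound C fun x => ?_)
  have hentry (j : ι) : ‖T x j‖ₑ ≤ ∑' k, K j k * ‖x k‖ₑ := by
    rw [← (lp.hasSum_inner_single_mul_apply T x j).tsum_eq]
    refine enorm_tsum_le_tsum_enorm.trans (ENNReal.tsum_le_tsum fun k => ?_)
    rw [enorm_mul]
    gcongr
    exact hK j k
  suffices ‖T x‖ₑ ^ 2 ≤ (C * ‖x‖ₑ) ^ 2 by
    rwa [ENNReal.pow_le_pow_left_iff two_ne_zero, enorm_eq_nnnorm, enorm_eq_nnnorm,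
      ← ENNReal.coe_mul, ENNReal.coe_le_coe] at this
  calc ‖T x‖ₑ ^ 2 = ∑' j, ‖T x j‖ₑ ^ 2 := (lp.tsum_enorm_sq _).symm
    _ ≤ ∑' j, (∑' k, K j k * ‖x k‖ₑ) ^ 2 := by gcongr with j; exact hentry j
    _ ≤ C * C * ∑' k, ‖x k‖ₑ ^ 2 := ENNReal.tsum_sq_le_of_schur hp₀ hp_top hrow hcol _
    _ = (C * ‖x‖ₑ) ^ 2 := by rw [lp.tsum_enorm_sq, mul_pow, sq (C : ℝ≥0∞)]

end SchurTest

noncomputable def Bweight (a b c : ℝ) (j : ℕ) : ℝ :=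
  √(Gamma (j + b) * Gamma (j + c) / (Gamma (j + a) * j !))

noncomputable def Beigvec (a b c : ℝ) (j : ℕ) : ℝ :=
  Bweight a b c j * Gamma (j + a) / Gamma (j + c)

section Hankel

variable {a b c : ℝ}

theorem Bweight_sq (ha : 0 < a) (hb : 0 < b) (hc : 0 < c) (j : ℕ) :
    Bweight a b c j ^ 2 = Gamma (j + b) * Gamma (j + c) / (Gamma (j + a) * j !) :=
  sq_sqrt (by positivity)

theorem Bent_eq (ha : 0 < a) (hb : 0 < b) (hc : 0 < c) (j k : ℕ) :
    Bent a b c j k =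
      Gamma (j + k + a) / Gamma (j + k + b + c) * (Bweight a b c j * Bweight a b c k) := by
  rw [Bent, Bweight, Bweight, ← sqrt_mul (by positivity)]
  congr 2
  ring

theorem Bent_nonneg (ha : 0 < a) (hb : 0 < b) (hc : 0 < c) (j k : ℕ) : 0 ≤ Bent a b c j k := by
  rw [Bent_eq ha hb hc]
  unfold Bweight
  positivity

theorem Bent_comm (j k : ℕ) : Bent a b c j k = Bent a b c k j := by
  unfold Bent
  rw [add_comm (j : ℝ) k]
  congr 2
  ring

theorem Beigvec_pos (ha : 0 < a) (hb : 0 < b) (hc : 0 < c) (j : ℕ) : 0 < Beigvec a b c j := by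
  unfold Beigvec Bweight
  have : 0 < Gamma (j + b) * Gamma (j + c) / (Gamma (j + a) * j !) := by positivity
  positivity

theorem Beigvec_sq (ha : 0 < a) (hb : 0 < b) (hc : 0 < c) (j : ℕ) :
    Beigvec a b c j ^ 2 = Gamma (j + a) * Gamma (j + b) / (Gamma (j + c) * j !) := by
  have : Gamma (j + a) ≠ 0 := by positivity
  have : Gamma (j + c) ≠ 0 := by positivity
  rw [Beigvec, div_pow, mul_pow, Bweight_sq ha hb hc]
  field_simp

theorem Bent_mul_Beigvec (ha : 0 < a) (hb : 0 < b) (hc : 0 < c) (j k : ℕ) :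
    Bent a b c j k * Beigvec a b c k = Bweight a b c j *
      (Gamma (k + (j + a)) * Gamma (k + b) / (Gamma (k + (j + b + c)) * k !)) := by
  have : Gamma (k + a) ≠ 0 := by positivity
  have : Gamma (k + c) ≠ 0 := by positivity
  have hsq := Bweight_sq ha hb hc k
  rw [Bent_eq ha hb hc, Beigvec, show (j : ℝ) + k + a = k + (j + a) by ring,
    show (j : ℝ) + k + b + c = k + (j + b + c) by ring]
  field_simp
  rw [hsq]
  field_simp

theorem hasSum_Bent_mul_Beigvec (ha : 0 < a) (hb : 0 < b) (habc : a + b < c) (j : ℕ) :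
    HasSum (fun k => Bent a b c j k * Beigvec a b c k)
      (Gamma b * Gamma (c - a) / Gamma (b + c - a) * Beigvec a b c j) := by
  have hc : 0 < c := by linarith
  have h := (hasSum_Gamma_mul_Gamma_div_Gamma_mul_factorial (x := j + a) (β := b)
    (y := j + b + c) (by positivity) hb (by linarith)).mul_left (Bweight a b c j)
  rw [show (j : ℝ) + b + c - (j + a) - b = c - a by ring,
    show (j : ℝ) + b + c - (j + a) = b + c - a by ring,
    show (j : ℝ) + b + c - b = j + c by ring] at h
  have hval : Gamma b * Gamma (c - a) / Gamma (b + c - a) * Beigvec a b c j = Bweight a b c j *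
      (Gamma (j + a) * Gamma b * Gamma (c - a) / (Gamma (b + c - a) * Gamma (j + c))) := by
    unfold Beigvec
    ring
  simpa only [Bent_mul_Beigvec ha hb hc, hval] using h

theorem summable_Beigvec_sq (ha : 0 < a) (hb : 0 < b) (habc : a + b < c) :
    Summable fun j => Beigvec a b c j ^ 2 := by
  have hc : 0 < c := by linarith
  simp only [Beigvec_sq ha hb hc]
  exact (hasSum_Gamma_mul_Gamma_div_Gamma_mul_factorial ha hb habc).summable

end Hankel

namespace Represents

variable {a b c : ℝ} {Bop : l2 →L[ℂ] l2}

theorem hasSum_apply (hrep : Represents a b c Bop) (x : l2) (j : ℕ) :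
    HasSum (fun k => (Bent a b c j k : ℂ) * x k) (Bop x j) := by
  simpa only [hrep j] using lp.hasSum_inner_single_mul_apply Bop x j

theorem opNorm_le (hrep : Represents a b c Bop) (ha : 0 < a) (hb : 0 < b) (habc : a + b < c) :
    ‖Bop‖ ≤ Gamma b * Gamma (c - a) / Gamma (b + c - a) := by
  have hc : 0 < c := by linarith
  have hC : 0 ≤ Gamma b * Gamma (c - a) / Gamma (b + c - a) := by
    have : 0 < c - a := by linarith
    have : 0 < b + c - a := by linarith
    positivity
  have hrow (j : ℕ) : ∑' k, ENNReal.ofReal (Bent a b c j k) * ENNReal.ofReal (Beigvec a b c k) =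
      ENNReal.ofReal (Gamma b * Gamma (c - a) / Gamma (b + c - a)) *
        ENNReal.ofReal (Beigvec a b c j) := by
    have h := hasSum_Bent_mul_Beigvec ha hb habc j
    simp only [← ENNReal.ofReal_mul (Bent_nonneg ha hb hc _ _), ← ENNReal.ofReal_mul hC]
    rw [← ENNReal.ofReal_tsum_of_nonneg (fun k => mul_nonneg (Bent_nonneg ha hb hc _ _)
      (Beigvec_pos ha hb hc k).le) h.summable, h.tsum_eq]
  have := Bop.opNorm_le_of_schur (K := fun j k => ENNReal.ofReal (Bent a b c j k))
    (p := fun k => ENNReal.ofReal (Beigvec a b c k))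
    (C := (Gamma b * Gamma (c - a) / Gamma (b + c - a)).toNNReal)
    (fun j k => by
      rw [hrep j k, ← ofReal_norm, Complex.norm_real,
        Real.norm_of_nonneg (Bent_nonneg ha hb hc _ _)])
    (fun k => by simpa using Beigvec_pos ha hb hc k) (fun k => ENNReal.ofReal_ne_top)
    (fun j => (hrow j).le) (fun k => by simp only [Bent_comm _ k]; exact (hrow k).le)
  rwa [Real.coe_toNNReal _ hC] at this

theorem le_opNorm (hrep : Represents a b c Bop) (ha : 0 < a) (hb : 0 < b) (habc : a + b < c) :
    Gamma b * Gamma (c - a) / Gamma (b + c - a) ≤ ‖Bop‖ := by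
  have hc : 0 < c := by linarith
  have hmem : Memℓp (fun j => (Beigvec a b c j : ℂ)) 2 := by
    refine memℓp_gen ?_
    simpa [Complex.norm_real, abs_of_pos (Beigvec_pos ha hb hc _)] using
      summable_Beigvec_sq ha hb habc
  set P : l2 := ⟨_, hmem⟩
  have hP : Bop P = ((Gamma b * Gamma (c - a) / Gamma (b + c - a) : ℝ) : ℂ) • P := by
    ext j
    refine (hrep.hasSum_apply P j).unique ?_
    simpa [P, mul_comm] using Complex.hasSum_ofReal.2 (hasSum_Bent_mul_Beigvec ha hb habc j)
  have hP0 : P ≠ 0 := by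
    intro h
    have := congr_arg (fun x : l2 => x 0) h
    simp [P, (Beigvec_pos ha hb hc 0).ne'] at this
  have := Bop.norm_le_opNorm_of_apply_eq_smul hP0 hP
  rw [Complex.norm_real, Real.norm_eq_abs] at this
  exact (le_abs_self _).trans this

end Represents

theorem norm_eq_discrete_top_general (a b c : ℝ)
    (hb : 0 < b) (ha : 0 < a) (hac : a < c - b)
    (Bop : l2 →L[ℂ] l2) (hrep : Represents a b c Bop) :
    ‖Bop‖ = Real.Gamma b * Real.Gamma (c - a) / Real.Gamma (b + c - a) := by
  have habc : a + b < c := by linarith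
  exact le_antisymm (hrep.opNorm_le ha hb habc) (hrep.le_opNorm ha hb habc)

/-- If `0 < b < c` and `0 < a < c − b`, the norm of `B(a,b,c)` equals
`Γ(b)Γ(c−a)/Γ(b+c−a)`. -/
theorem norm_eq_discrete_top (a b c : ℝ)
    (hb : 0 < b) (hbc : b < c) (ha : 0 < a) (hac : a < c - b)
    (Bop : l2 →L[ℂ] l2) (hrep : Represents a b c Bop) :
    ‖Bop‖ = Real.Gamma b * Real.Gamma (c - a) / Real.Gamma (b + c - a) :=
  norm_eq_discrete_top_general a b c hb ha hac Bop hrep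
end

section
/- Let a, b, c be real numbers satisfying 0 < b < c and 0 < a < c − b. Then the numbers β_k = Γ(b+k)Γ(c−a−k)/Γ(b+c−a) are strictly decreasing in k, i.e. β_k > β_{k+1} for 0 ≤ k < N(a,b,c), and β_{N(a,b,c)} > M(a,b,c). -/
/-- The Pochhammer symbol `(x)_m = x(x+1)⋯(x+m−1)`. -/
noncomputable def poch (x : ℝ) (m : ℕ) : ℝ := ∏ l ∈ Finset.range m, (x + l)

/-- The terminating hypergeometric sum `₃F₂(−n, p, q; r, s; 1)`. -/
noncomputable def F32 (n : ℕ) (p q r s : ℝ) : ℝ :=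
  ∑ m ∈ Finset.range (n + 1),
    poch (-(n : ℝ)) m * poch p m * poch q m / (poch r m * poch s m * (Nat.factorial m))

/-- The component `n` of the eigenvector `v_k` of `B(a,b,c)`. -/
noncomputable def vvec (a b c : ℝ) (k n : ℕ) : ℝ :=
  Real.sqrt (poch b n * poch c n / (poch a n * (Nat.factorial n))) *
    F32 n (b + k) (c - a - k) b c

/-- The eigenvalue `β_k = Γ(b+k)Γ(c−a−k)/Γ(b+c−a)`. -/
noncomputable def betaEV (a b c : ℝ) (k : ℕ) : ℝ :=
  Real.Gamma (b + k) * Real.Gamma (c - a - k) / Real.Gamma (b + c - a)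

lemma strictConvexOn_logGamma : StrictConvexOn ℝ (Set.Ioi (0:ℝ)) (fun x => Real.log (Real.Gamma x)) := by
  have h1 : ConvexOn ℝ (Set.Ioi (0:ℝ))
      ((Real.log ∘ Real.Gamma) ∘ fun z : ℝ => z + 1) := by
    refine (Real.convexOn_log_Gamma.translate_left 1).subset (fun x hx => ?_) (convex_Ioi 0)
    have : (0:ℝ) < x := hx
    simp only [Set.mem_preimage, Set.mem_Ioi]
    linarith
  have h2 : StrictConvexOn ℝ (Set.Ioi (0:ℝ)) (fun x : ℝ => -Real.log x) :=
    strictConcaveOn_log_Ioi.neg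
  have h3 := h1.add_strictConvexOn h2
  refine h3.congr fun x hx => ?_
  have hx0 : (0:ℝ) < x := hx
  have hg : Real.Gamma (x + 1) = x * Real.Gamma x := Real.Gamma_add_one hx0.ne'
  simp only [Pi.add_apply, Function.comp_apply, hg,
    Real.log_mul hx0.ne' (Real.Gamma_pos_of_pos hx0).ne']
  ring

lemma Gamma_sq_lt {x y : ℝ} (hx : 0 < x) (hy : 0 < y) (hne : x ≠ y) :
    Real.Gamma ((x + y) / 2) ^ 2 < Real.Gamma x * Real.Gamma y := by
  have h := strictConvexOn_logGamma.2 (Set.mem_Ioi.mpr hx) (Set.mem_Ioi.mpr hy) hne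
    (by norm_num : (0:ℝ) < 1/2) (by norm_num : (0:ℝ) < 1/2) (by norm_num)
  have hm : (1/2 : ℝ) • x + (1/2 : ℝ) • y = (x + y) / 2 := by
    simp [smul_eq_mul]; ring
  rw [hm] at h
  have hgx := Real.Gamma_pos_of_pos hx
  have hgy := Real.Gamma_pos_of_pos hy
  have hgm := Real.Gamma_pos_of_pos (by linarith : (0:ℝ) < (x + y)/2)
  have hlog : Real.log (Real.Gamma ((x+y)/2) ^ 2) < Real.log (Real.Gamma x * Real.Gamma y) := by
    rw [Real.log_pow, Real.log_mul hgx.ne' hgy.ne']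
    push_cast
    simp only [smul_eq_mul] at h
    linarith
  have := Real.exp_lt_exp.mpr hlog
  rwa [Real.exp_log (by positivity), Real.exp_log (by positivity)] at this

/-- The eigenvalues `β_k` are strictly decreasing in `k`, and all exceed the threshold
`M(a,b,c) = Γ((b+c−a)/2)²/Γ(b+c−a)`. -/
theorem betaEV_strict_order (a b c : ℝ)
    (hb : 0 < b) (hbc : b < c) (ha : 0 < a) (hac : a < c - b) :
    (∀ k : ℕ, (k : ℤ) < ⌈(c - a - b) / 2⌉ - 1 → betaEV a b c (k + 1) < betaEV a b c k) ∧
    Real.Gamma ((b + c - a) / 2) ^ 2 / Real.Gamma (b + c - a)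
      < betaEV a b c (⌈(c - a - b) / 2⌉ - 1).toNat := by
  have ht : 0 < (c - a - b) / 2 := by linarith
  have hS : 0 < b + c - a := by linarith
  have hgS : 0 < Real.Gamma (b + c - a) := Real.Gamma_pos_of_pos hS
  constructor
  · intro k hk
    have hk2 : (k : ℤ) + 2 ≤ ⌈(c - a - b) / 2⌉ := by omega
    have hceil : (⌈(c - a - b) / 2⌉ : ℝ) < (c - a - b) / 2 + 1 := Int.ceil_lt_add_one _
    have hk' : (k : ℝ) + 1 < (c - a - b) / 2 := by
      have : ((k : ℝ) + 2) ≤ (⌈(c - a - b) / 2⌉ : ℝ) := by exact_mod_cast hk2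
      linarith
    have hbk : 0 < b + (k : ℝ) := by positivity
    have hck : b + (k : ℝ) < c - a - (k : ℝ) - 1 := by linarith
    have hgbk : 0 < Real.Gamma (b + (k : ℝ)) := Real.Gamma_pos_of_pos hbk
    have hgck : 0 < Real.Gamma (c - a - (k : ℝ) - 1) :=
      Real.Gamma_pos_of_pos (by linarith)
    unfold betaEV
    have e1 : b + ((k : ℕ) + 1 : ℕ) = (b + (k : ℝ)) + 1 := by push_cast; ring
    have e2 : c - a - ((k : ℕ) + 1 : ℕ) = c - a - (k : ℝ) - 1 := by push_cast; ring
    have e3 : c - a - (k : ℕ) = (c - a - (k : ℝ) - 1) + 1 := by push_cast; ring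
    rw [e1, e3, e2, Real.Gamma_add_one hbk.ne', Real.Gamma_add_one (by linarith : c - a - (k:ℝ) - 1 ≠ 0)]
    rw [div_lt_div_iff₀ hgS hgS]
    have : (b + (k:ℝ)) * Real.Gamma (b + (k:ℝ)) * Real.Gamma (c - a - (k:ℝ) - 1)
        < Real.Gamma (b + (k:ℝ)) * ((c - a - (k:ℝ) - 1) * Real.Gamma (c - a - (k:ℝ) - 1)) := by
      nlinarith [mul_pos hgbk hgck]
    nlinarith [mul_lt_mul_of_pos_right this hgS]
  · set N : ℕ := (⌈(c - a - b) / 2⌉ - 1).toNat with hN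
    have hc1 : 1 ≤ ⌈(c - a - b) / 2⌉ := Int.ceil_pos.mpr ht
    have hNZ : (N : ℤ) = ⌈(c - a - b) / 2⌉ - 1 := Int.toNat_of_nonneg (by omega)
    have hceil : (⌈(c - a - b) / 2⌉ : ℝ) < (c - a - b) / 2 + 1 := Int.ceil_lt_add_one _
    have hNt : (N : ℝ) < (c - a - b) / 2 := by
      have : ((N : ℤ) : ℝ) = (⌈(c - a - b) / 2⌉ : ℝ) - 1 := by rw [hNZ]; push_cast; ring
      rw [show ((N:ℤ):ℝ) = (N:ℝ) by push_cast; ring] at this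
      linarith
    have hx : 0 < b + (N : ℝ) := by positivity
    have hy : 0 < c - a - (N : ℝ) := by linarith
    have hne : b + (N : ℝ) ≠ c - a - (N : ℝ) := by
      intro h; nlinarith
    have key := Gamma_sq_lt hx hy hne
    have hmid : ((b + (N:ℝ)) + (c - a - (N:ℝ))) / 2 = (b + c - a) / 2 := by ring
    rw [hmid] at key
    unfold betaEV
    rw [div_lt_div_iff₀ hgS hgS]
    nlinarith [hgS, key]
end

section
/- Let u > 0 be real. Then the function g(t) = Γ(u−t)·Γ(u+t) is strictly increasing on the interval [0, u). -/
/-!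
`log Γ` is strictly convex on `(0, ∞)`: it is `log Γ(x + 1) - log x`, a convex function plus a
strictly convex one. For `0 ≤ s < t < u` the points `u ± s` lie strictly
between `u - t` and `u + t` and have the same sum, so strict convexity gives
`log Γ(u - s) + log Γ(u + s) < log Γ(u - t) + log Γ(u + t)`.
-/

open Real Set

theorem StrictConvexOn.add_lt_add_of_mem_Ioo {𝕜 : Type*} [Field 𝕜] [LinearOrder 𝕜]
    [IsStrictOrderedRing 𝕜] {s : Set 𝕜} {f : 𝕜 → 𝕜} (hf : StrictConvexOn 𝕜 s f) {a b c d : 𝕜}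
    (ha : a ∈ s) (hd : d ∈ s) (hb : b ∈ Ioo a d) (hsum : b + c = a + d) :
    f b + f c < f a + f d := by
  have hc : c ∈ Ioo a d := ⟨by linarith [hb.2], by linarith [hb.1]⟩
  have hfb := hf.secant_strict_mono_aux1 ha hd hb.1 hb.2
  have hfc := hf.secant_strict_mono_aux1 ha hd hc.1 hc.2
  have had : 0 < d - a := by linarith [hb.1, hb.2]
  have hsum' : (d - a) * (f b + f c) < (d - a) * (f a + f d) := by
    linear_combination hfb + hfc + (f d - f a) * hsum
  exact lt_of_mul_lt_mul_left hsum' had.le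

theorem strictConvexOn_log_Gamma : StrictConvexOn ℝ (Ioi 0) (log ∘ Gamma) := by
  have hshift : ConvexOn ℝ (Ioi 0) (fun x => log (Gamma (1 + x))) := by
    refine (convexOn_log_Gamma.translate_right 1).subset (fun x hx => ?_) (convex_Ioi 0)
    simp only [mem_preimage, mem_Ioi] at hx ⊢
    linarith
  refine (hshift.sub_strictConcaveOn strictConcaveOn_log_Ioi).congr fun x (hx : 0 < x) => ?_
  simp [add_comm 1 x, Gamma_add_one hx.ne', log_mul hx.ne' (Gamma_pos_of_pos hx).ne']

theorem gamma_product_strictMonoOn_general (u : ℝ) :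
    StrictMonoOn (fun t : ℝ => Real.Gamma (u - t) * Real.Gamma (u + t)) (Set.Ico 0 u) := by
  rintro s ⟨hs0, -⟩ t ⟨-, htu⟩ hst
  have h₁ := Gamma_pos_of_pos (show 0 < u - t by linarith)
  have h₂ := Gamma_pos_of_pos (show 0 < u - s by linarith)
  have h₃ := Gamma_pos_of_pos (show 0 < u + s by linarith)
  have h₄ := Gamma_pos_of_pos (show 0 < u + t by linarith)
  have hlog : log (Gamma (u - s)) + log (Gamma (u + s)) <
      log (Gamma (u - t)) + log (Gamma (u + t)) :=
    strictConvexOn_log_Gamma.add_lt_add_of_mem_Ioo (mem_Ioi.2 (by linarith))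
      (mem_Ioi.2 (by linarith)) ⟨by linarith, by linarith⟩ (by ring)
  rw [← log_mul h₂.ne' h₃.ne', ← log_mul h₁.ne' h₄.ne'] at hlog
  exact (log_lt_log_iff (by positivity) (by positivity)).1 hlog

/-- For `u > 0`, the function `t ↦ Γ(u−t)Γ(u+t)` is strictly increasing on `[0, u)`. -/
theorem gamma_product_strictMonoOn (u : ℝ) (hu : 0 < u) :
    StrictMonoOn (fun t : ℝ => Real.Gamma (u - t) * Real.Gamma (u + t)) (Set.Ico 0 u) :=
  gamma_product_strictMonoOn_general u
end

section
/- Let u be a real number. Then the function x ↦ |Γ(u + ix)|² is strictly decreasing on (0, ∞), where Γ denotes the complex Gamma function. -/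
/-!
Along a horizontal line, `‖Γ(u + tI)‖` is the limit of `n ^ u * n! / ∏ j ≤ n, ‖(u + j) + tI‖`,
each term of which is antitone in `t > 0`; hence `t ↦ ‖Γ(u + tI)‖` is antitone for every `u`.
Strictness comes from the functional equation `‖Γ(u + tI)‖ = ‖Γ(u + 1 + tI)‖ / ‖u + tI‖`:
the numerator is antitone by the first step and the denominator is strictly increasing.
-/

open Complex Filter Finset Set Topology
open scoped Nat

namespace Complex

lemma strictMonoOn_norm_add_mul_I (a : ℝ) :
    StrictMonoOn (fun t : ℝ => ‖(a : ℂ) + t * I‖) (Ici 0) := by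
  intro s hs t ht hst
  simp only [norm_add_mul_I]
  gcongr

lemma add_mul_I_ne_zero (a : ℝ) {t : ℝ} (ht : t ≠ 0) : (a : ℂ) + t * I ≠ 0 := fun h =>
  ht <| by simpa using congrArg im h

lemma Gamma_add_mul_I_ne_zero (u : ℝ) {t : ℝ} (ht : t ≠ 0) : Gamma (u + t * I) ≠ 0 :=
  Gamma_ne_zero fun m h => ht <| by simpa using congrArg im h

lemma norm_GammaSeq_add_mul_I (u t : ℝ) {n : ℕ} (hn : 0 < n) :
    ‖GammaSeq (u + t * I) n‖ =
      (n : ℝ) ^ u * n ! / ∏ j ∈ range (n + 1), ‖((u + j : ℝ) : ℂ) + t * I‖ := by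
  rw [GammaSeq, norm_div, norm_mul, norm_natCast_cpow_of_pos hn, Complex.norm_prod, norm_natCast]
  congr 2
  · simp
  · ext j
    push_cast
    rw [add_right_comm]

lemma antitoneOn_norm_GammaSeq_add_mul_I (u : ℝ) {n : ℕ} (hn : 0 < n) :
    AntitoneOn (fun t : ℝ => ‖GammaSeq (u + t * I) n‖) (Ioi 0) := by
  intro s hs t ht hst
  simp only [norm_GammaSeq_add_mul_I _ _ hn]
  refine div_le_div_of_nonneg_left (by positivity)
    (prod_pos fun j _ => norm_pos_iff.2 (add_mul_I_ne_zero _ (ne_of_gt hs)))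
    (prod_le_prod (fun j _ => norm_nonneg _) fun j _ => ?_)
  exact (strictMonoOn_norm_add_mul_I _).monotoneOn (mem_Ici.2 (le_of_lt hs))
    (mem_Ici.2 (le_of_lt ht)) hst

lemma antitoneOn_norm_Gamma_add_mul_I (u : ℝ) :
    AntitoneOn (fun t : ℝ => ‖Gamma (u + t * I)‖) (Ioi 0) := by
  intro s hs t ht hst
  have hlim (r : ℝ) : Tendsto (fun n => ‖GammaSeq (u + r * I) n‖) atTop (𝓝 ‖Gamma (u + r * I)‖) :=
    (GammaSeq_tendsto_Gamma _).norm
  exact le_of_tendsto_of_tendsto (hlim t) (hlim s) <| eventually_atTop.2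
    ⟨1, fun n hn => antitoneOn_norm_GammaSeq_add_mul_I u hn hs ht hst⟩

lemma norm_Gamma_add_mul_I_eq_div (u : ℝ) {t : ℝ} (ht : t ≠ 0) :
    ‖Gamma (u + t * I)‖ = ‖Gamma ((u + 1 : ℝ) + t * I)‖ / ‖(u : ℂ) + t * I‖ := by
  have hne := add_mul_I_ne_zero u ht
  rw [show ((u + 1 : ℝ) : ℂ) + t * I = (u + t * I) + 1 by push_cast; ring,
    Gamma_add_one _ hne, norm_mul, mul_div_cancel_left₀ _ (norm_ne_zero_iff.2 hne)]

lemma strictAntiOn_norm_Gamma_add_mul_I (u : ℝ) :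
    StrictAntiOn (fun t : ℝ => ‖Gamma (u + t * I)‖) (Ioi 0) := by
  intro s hs t ht hst
  have hs0 : s ≠ 0 := ne_of_gt hs
  simp only [norm_Gamma_add_mul_I_eq_div u hs0, norm_Gamma_add_mul_I_eq_div u (ne_of_gt ht)]
  calc ‖Gamma ((u + 1 : ℝ) + t * I)‖ / ‖(u : ℂ) + t * I‖
      ≤ ‖Gamma ((u + 1 : ℝ) + s * I)‖ / ‖(u : ℂ) + t * I‖ := by
        gcongr
        exact antitoneOn_norm_Gamma_add_mul_I (u + 1) hs ht (le_of_lt hst)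
    _ < ‖Gamma ((u + 1 : ℝ) + s * I)‖ / ‖(u : ℂ) + s * I‖ := by
        gcongr
        · exact norm_pos_iff.2 (Gamma_add_mul_I_ne_zero _ hs0)
        · exact norm_pos_iff.2 (add_mul_I_ne_zero _ hs0)
        · exact strictMonoOn_norm_add_mul_I u (mem_Ici.2 (le_of_lt hs))
            (mem_Ici.2 (le_of_lt ht)) hst

end Complex

/-- For any real `u`, the function `x ↦ |Γ(u + ix)|²` is strictly decreasing on `(0, ∞)`. -/
theorem abs_gamma_sq_strictAntiOn (u : ℝ) :
    StrictAntiOn (fun x : ℝ => ‖Complex.Gamma ((u : ℂ) + x * Complex.I)‖ ^ 2)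
      (Set.Ioi 0) := fun _ hs _ ht hst =>
  pow_lt_pow_left₀ (strictAntiOn_norm_Gamma_add_mul_I u hs ht hst) (norm_nonneg _) two_ne_zero
end

section
/- Let θ ≥ 1/2 be real. Then for every square-summable real sequence (ξ_k)_{k∈ℤ≥0} the double series Σ_{j=0}^∞ Σ_{k=0}^∞ ξ_j ξ_k/(j+k+θ) converges and satisfies 0 ≤ Σ_{j,k} ξ_j ξ_k/(j+k+θ) ≤ π·Σ_{k=0}^∞ ξ_k². Moreover the constant π is best possible: for every C < π there exists a square-summable real sequence (ξ_k), not identically zero, with Σ_{j,k} ξ_j ξ_k/(j+k+θ) > C·Σ_k ξ_k². -/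
/-!
Schur's argument: since `1 / (j + k + 1/2) = ∫₀^π sin ((2j + 2k + 1) t) dt`, the form
`Σ c_j c_k / (j + k + 1/2)` equals `∫₀^π Im (e^{it} z(t)²) dt`, where `z = P + iS` with
`P(t) = Σ c_j cos 2jt` and `S(t) = Σ c_j sin 2jt`. Pointwise `Im (e^{it} z²) ≤ |z|² = P² + S²`,
and `∫₀^π (P² + S²) = π Σ c_j²` by orthogonality. For nonnegative sequences, raising `1/2` to `θ`
only decreases the form, and applying the bound to `|ξ|` gives absolute convergence.
Nonnegativity comes from `1 / (j + k + θ) = ∫₀¹ t^(θ-1) t^j t^k dt`, which turns the form into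
`∫₀¹ t^(θ-1) (Σ ξ_j t^j)² dt`.

For sharpness take `ξ_k = (k + a)^(-1/2)` for `k < N`, where `a = θ + 1`. Comparing each row
with `∫ dx / (√x (x + y)) = (2/√y) arctan √(x/y)` bounds the form below by
`π Σ_{k<N} 1/(k + a) - B` with `B` independent of `N`, while `Σ ξ_k² = Σ_{k<N} 1/(k + a)`
diverges.
-/

open Real Finset Filter MeasureTheory

section DoubleSum

variable {ι κ : Type*} (s : Finset ι) (u : Finset κ) {a b : ℝ}

theorem intervalIntegrable_fun_sum {g : ι → ℝ → ℝ}
    (hg : ∀ i, IntervalIntegrable (g i) volume a b) :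
    IntervalIntegrable (fun t => ∑ i ∈ s, g i t) volume a b := by
  simpa only [sum_fn] using IntervalIntegrable.sum s fun i _ => hg i

variable {f : ι → κ → ℝ → ℝ}

theorem intervalIntegrable_sum_sum (hf : ∀ i k, IntervalIntegrable (f i k) volume a b) :
    IntervalIntegrable (fun t => ∑ i ∈ s, ∑ k ∈ u, f i k t) volume a b :=
  intervalIntegrable_fun_sum s fun i => intervalIntegrable_fun_sum u (hf i)

theorem integral_sum_sum (hf : ∀ i k, IntervalIntegrable (f i k) volume a b) :
    ∫ t in a..b, ∑ i ∈ s, ∑ k ∈ u, f i k t = ∑ i ∈ s, ∑ k ∈ u, ∫ t in a..b, f i k t := by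
  rw [intervalIntegral.integral_finsetSum fun i _ => intervalIntegrable_fun_sum u (hf i)]
  exact sum_congr rfl fun i _ => intervalIntegral.integral_finsetSum fun k _ => hf i k

end DoubleSum

theorem integral_sin_two_mul_add_one (n : ℕ) :
    ∫ t in (0:ℝ)..π, sin ((2 * n + 1) * t) = 2 / (2 * n + 1) := by
  have hc : (2 * (n : ℝ) + 1) ≠ 0 := by positivity
  rw [intervalIntegral.integral_comp_mul_left (fun t => sin t) hc, integral_sin, mul_zero,
    cos_zero, smul_eq_mul, show (2 * (n : ℝ) + 1) * π = n * (2 * π) + π by ring,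
    cos_nat_mul_two_pi_add_pi]
  field_simp
  ring

theorem integral_cos_two_mul_sub (j k : ℕ) :
    ∫ t in (0:ℝ)..π, cos (2 * ((j : ℝ) - k) * t) = if j = k then π else 0 := by
  split_ifs with h
  · simp [h]
  · have hc : 2 * ((j : ℝ) - k) ≠ 0 := by simpa [sub_eq_zero] using h
    rw [intervalIntegral.integral_comp_mul_left (fun t => cos t) hc, integral_cos, mul_zero,
      sin_zero, smul_eq_mul,
      show 2 * ((j : ℝ) - k) * π = ((2 * ((j : ℤ) - k) : ℤ) : ℝ) * π by push_cast; ring,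
      sin_int_mul_pi]
    simp

theorem sin_mul_sub_add_cos_mul_le {s c p q : ℝ} (h : s ^ 2 + c ^ 2 = 1) :
    s * (p ^ 2 - q ^ 2) + c * (p * q + q * p) ≤ p ^ 2 + q ^ 2 := by
  nlinarith [sq_nonneg ((1 - s) * p - c * q), sq_nonneg ((1 + s) * q - c * p)]

theorem sum_sum_mul_sin_eq (c : ℕ → ℝ) (N : ℕ) (t : ℝ) :
    ∑ j ∈ range N, ∑ k ∈ range N, c j * c k * sin ((2 * ((j : ℝ) + k) + 1) * t) =
      sin t * ((∑ j ∈ range N, c j * cos (2 * j * t)) ^ 2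
          - (∑ j ∈ range N, c j * sin (2 * j * t)) ^ 2)
        + cos t * ((∑ j ∈ range N, c j * cos (2 * j * t)) * (∑ j ∈ range N, c j * sin (2 * j * t))
          + (∑ j ∈ range N, c j * sin (2 * j * t)) * ∑ j ∈ range N, c j * cos (2 * j * t)) := by
  simp only [sq, sum_mul_sum]
  simp only [mul_sum, ← sum_sub_distrib, ← sum_add_distrib]
  refine sum_congr rfl fun j _ => sum_congr rfl fun k _ => ?_
  rw [show (2 * ((j : ℝ) + k) + 1) * t = 2 * j * t + (2 * k * t + t) by ring, sin_add, sin_add,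
    cos_add]
  ring

theorem sum_sum_mul_cos_eq (c : ℕ → ℝ) (N : ℕ) (t : ℝ) :
    ∑ j ∈ range N, ∑ k ∈ range N, c j * c k * cos (2 * ((j : ℝ) - k) * t) =
      (∑ j ∈ range N, c j * cos (2 * j * t)) ^ 2 + (∑ j ∈ range N, c j * sin (2 * j * t)) ^ 2 := by
  simp only [sq, sum_mul_sum, ← sum_add_distrib]
  refine sum_congr rfl fun j _ => sum_congr rfl fun k _ => ?_
  rw [show 2 * ((j : ℝ) - k) * t = 2 * j * t - 2 * k * t by ring, cos_sub]
  ring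

theorem sum_sum_mul_sin_le (c : ℕ → ℝ) (N : ℕ) (t : ℝ) :
    ∑ j ∈ range N, ∑ k ∈ range N, c j * c k * sin ((2 * ((j : ℝ) + k) + 1) * t) ≤
      ∑ j ∈ range N, ∑ k ∈ range N, c j * c k * cos (2 * ((j : ℝ) - k) * t) := by
  rw [sum_sum_mul_sin_eq, sum_sum_mul_cos_eq]
  exact sin_mul_sub_add_cos_mul_le (sin_sq_add_cos_sq t)

theorem sum_sum_mul_div_add_half_le (c : ℕ → ℝ) (N : ℕ) :
    ∑ j ∈ range N, ∑ k ∈ range N, c j * c k / ((j : ℝ) + k + 1 / 2) ≤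
      π * ∑ j ∈ range N, c j ^ 2 := by
  have hsin : ∀ j k : ℕ,
      IntervalIntegrable (fun t => c j * c k * sin ((2 * ((j : ℝ) + k) + 1) * t)) volume 0 π :=
    fun j k => by apply Continuous.intervalIntegrable; fun_prop
  have hcos : ∀ j k : ℕ,
      IntervalIntegrable (fun t => c j * c k * cos (2 * ((j : ℝ) - k) * t)) volume 0 π :=
    fun j k => by apply Continuous.intervalIntegrable; fun_prop
  calc ∑ j ∈ range N, ∑ k ∈ range N, c j * c k / ((j : ℝ) + k + 1 / 2)
      = ∑ j ∈ range N, ∑ k ∈ range N,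
          ∫ t in (0:ℝ)..π, c j * c k * sin ((2 * ((j : ℝ) + k) + 1) * t) := by
        refine sum_congr rfl fun j _ => sum_congr rfl fun k _ => ?_
        rw [intervalIntegral.integral_const_mul, ← Nat.cast_add, integral_sin_two_mul_add_one]
        push_cast
        field_simp
    _ ≤ ∑ j ∈ range N, ∑ k ∈ range N,
          ∫ t in (0:ℝ)..π, c j * c k * cos (2 * ((j : ℝ) - k) * t) := by
        rw [← integral_sum_sum _ _ hsin, ← integral_sum_sum _ _ hcos]
        exact intervalIntegral.integral_mono_on pi_pos.le (intervalIntegrable_sum_sum _ _ hsin)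
          (intervalIntegrable_sum_sum _ _ hcos) fun t _ => sum_sum_mul_sin_le c N t
    _ = π * ∑ j ∈ range N, c j ^ 2 := by
        simp only [intervalIntegral.integral_const_mul, integral_cos_two_mul_sub, mul_ite, mul_zero,
          sum_ite_eq, mem_range, mul_sum]
        refine sum_congr rfl fun j hj => ?_
        rw [if_pos (mem_range.1 hj)]
        ring

theorem integral_rpow_mul_pow {θ : ℝ} (hθ : 0 < θ) (n : ℕ) :
    ∫ t in (0:ℝ)..1, t ^ (θ - 1) * t ^ n = 1 / (n + θ) := by
  have hpow : ∀ t ∈ Set.uIoc (0:ℝ) 1, t ^ (θ - 1) * t ^ n = t ^ ((n + θ) - 1) := fun t ht => by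
    have ht : 0 < t := by simpa using ht.1
    rw [← rpow_natCast, ← rpow_add ht]
    ring_nf
  rw [intervalIntegral.integral_congr_ae (ae_of_all _ hpow),
    integral_rpow (Or.inl (by linarith [n.cast_nonneg (α := ℝ)]))]
  simp [zero_rpow (by positivity : (n : ℝ) + θ ≠ 0)]

theorem sum_sum_mul_div_nonneg {θ : ℝ} (hθ : 0 < θ) (ξ : ℕ → ℝ) (N : ℕ) :
    0 ≤ ∑ j ∈ range N, ∑ k ∈ range N, ξ j * ξ k / ((j : ℝ) + k + θ) := by
  have hint : ∀ j k : ℕ,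
      IntervalIntegrable (fun t : ℝ => ξ j * ξ k * (t ^ (θ - 1) * t ^ (j + k))) volume 0 1 :=
    fun j k => ((intervalIntegral.intervalIntegrable_rpow' (by linarith)).mul_continuousOn
      (continuous_pow _).continuousOn).const_mul _
  have hrepr : ∑ j ∈ range N, ∑ k ∈ range N, ξ j * ξ k / ((j : ℝ) + k + θ) =
      ∫ t in (0:ℝ)..1, t ^ (θ - 1) * (∑ j ∈ range N, ξ j * t ^ j) ^ 2 := by
    calc ∑ j ∈ range N, ∑ k ∈ range N, ξ j * ξ k / ((j : ℝ) + k + θ)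
        = ∑ j ∈ range N, ∑ k ∈ range N,
            ∫ t in (0:ℝ)..1, ξ j * ξ k * (t ^ (θ - 1) * t ^ (j + k)) := by
          refine sum_congr rfl fun j _ => sum_congr rfl fun k _ => ?_
          rw [intervalIntegral.integral_const_mul, integral_rpow_mul_pow hθ]
          push_cast
          ring
      _ = ∫ t in (0:ℝ)..1, t ^ (θ - 1) * (∑ j ∈ range N, ξ j * t ^ j) ^ 2 := by
          rw [← integral_sum_sum _ _ hint]
          refine intervalIntegral.integral_congr fun t _ => ?_
          simp only [sq, sum_mul_sum]
          simp only [mul_sum]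
          refine sum_congr rfl fun j _ => sum_congr rfl fun k _ => ?_
          ring
  rw [hrepr]
  exact intervalIntegral.integral_nonneg zero_le_one fun t ht =>
    mul_nonneg (rpow_nonneg ht.1 _) (sq_nonneg _)

theorem sum_sum_mul_div_le {θ : ℝ} (hθ : 1 / 2 ≤ θ) {a : ℕ → ℝ} (ha : 0 ≤ a) (N : ℕ) :
    ∑ j ∈ range N, ∑ k ∈ range N, a j * a k / ((j : ℝ) + k + θ) ≤ π * ∑ k ∈ range N, a k ^ 2 := by
  refine le_trans (sum_le_sum fun j _ => sum_le_sum fun k _ => ?_) (sum_sum_mul_div_add_half_le a N)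
  exact div_le_div_of_nonneg_left (mul_nonneg (ha j) (ha k)) (by positivity) (by linarith)

noncomputable def hilbertTerm (θ : ℝ) (ξ : ℕ → ℝ) (p : ℕ × ℕ) : ℝ :=
  ξ p.1 * ξ p.2 / ((p.1 : ℝ) + p.2 + θ)

theorem tendsto_range_product_range :
    Tendsto (fun N => range N ×ˢ range N) atTop atTop :=
  tendsto_atTop_finset_of_monotone
    (fun _ _ h => product_subset_product (range_mono h) (range_mono h))
    fun p => ⟨max p.1 p.2 + 1, by simp only [mem_product, mem_range]; omega⟩

theorem sum_range_product_hilbertTerm (θ : ℝ) (ξ : ℕ → ℝ) (N : ℕ) :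
    ∑ p ∈ range N ×ˢ range N, hilbertTerm θ ξ p =
      ∑ j ∈ range N, ∑ k ∈ range N, ξ j * ξ k / ((j : ℝ) + k + θ) :=
  sum_product _ _ _

theorem sum_hilbertTerm_le {θ : ℝ} (hθ : 1 / 2 ≤ θ) {a : ℕ → ℝ} (ha : 0 ≤ a)
    (ha2 : Summable fun k => a k ^ 2) (s : Finset (ℕ × ℕ)) :
    ∑ p ∈ s, hilbertTerm θ a p ≤ π * ∑' k, a k ^ 2 := by
  obtain ⟨N, hN⟩ := (tendsto_range_product_range.eventually (eventually_ge_atTop s)).exists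
  calc ∑ p ∈ s, hilbertTerm θ a p ≤ ∑ p ∈ range N ×ˢ range N, hilbertTerm θ a p :=
        sum_le_sum_of_subset_of_nonneg hN fun p _ _ =>
          div_nonneg (mul_nonneg (ha _) (ha _)) (by positivity)
    _ ≤ π * ∑ k ∈ range N, a k ^ 2 := by
        rw [sum_range_product_hilbertTerm]
        exact sum_sum_mul_div_le hθ ha N
    _ ≤ π * ∑' k, a k ^ 2 := by
        gcongr
        exact ha2.sum_le_tsum _ fun k _ => sq_nonneg _

theorem summable_hilbertTerm_and_tsum_le {θ : ℝ} (hθ : 1 / 2 ≤ θ) {ξ : ℕ → ℝ}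
    (hξ : Summable fun k => ξ k ^ 2) :
    Summable (hilbertTerm θ ξ) ∧ ∑' p, hilbertTerm θ ξ p ≤ π * ∑' k, ξ k ^ 2 := by
  have habs : (fun p => |hilbertTerm θ ξ p|) = hilbertTerm θ fun k => |ξ k| := by
    funext p
    have hden : 0 < (p.1 : ℝ) + p.2 + θ := by positivity
    rw [hilbertTerm, hilbertTerm, abs_div, abs_mul, abs_of_pos hden]
  have hξ' : Summable fun k => |ξ k| ^ 2 := by simpa only [sq_abs] using hξ
  have hbound := sum_hilbertTerm_le hθ (fun k => abs_nonneg (ξ k)) hξ'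
  simp only [sq_abs] at hbound
  have hsum : Summable fun p => |hilbertTerm θ ξ p| :=
    habs ▸ summable_of_sum_le (fun p => by rw [← habs]; exact abs_nonneg _) hbound
  refine ⟨hsum.of_abs, ?_⟩
  calc ∑' p, hilbertTerm θ ξ p ≤ ∑' p, |hilbertTerm θ ξ p| :=
        hsum.of_abs.tsum_le_tsum (fun p => le_abs_self _) hsum
    _ ≤ π * ∑' k, ξ k ^ 2 := by
        rw [habs]
        exact (habs ▸ hsum).tsum_le_of_sum_le hbound

theorem tsum_hilbertTerm_nonneg {θ : ℝ} (hθ : 0 < θ) {ξ : ℕ → ℝ} (h : Summable (hilbertTerm θ ξ)) :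
    0 ≤ ∑' p, hilbertTerm θ ξ p :=
  ge_of_tendsto' (h.hasSum.comp tendsto_range_product_range) fun N => by
    rw [Function.comp_apply, sum_range_product_hilbertTerm]
    exact sum_sum_mul_div_nonneg hθ ξ N

theorem arctan_le_self {x : ℝ} (hx : 0 ≤ x) : arctan x ≤ x := by
  simpa only [tan_arctan] using le_tan (arctan_nonneg.2 hx) (arctan_lt_pi_div_two x)

theorem pi_div_two_sub_inv_le_arctan {x : ℝ} (hx : 0 < x) : π / 2 - x⁻¹ ≤ arctan x := by
  linarith [arctan_inv_of_pos hx, arctan_le_self (inv_nonneg.2 hx.le)]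

theorem hasDerivAt_arctan_sqrt_div {x y : ℝ} (hx : 0 < x) (hy : 0 < y) :
    HasDerivAt (fun x => 2 / sqrt y * arctan (sqrt x / sqrt y)) (1 / (sqrt x * (x + y))) x := by
  have hsx := sqrt_pos.2 hx
  have hsy := sqrt_pos.2 hy
  have h := ((hasDerivAt_sqrt hx.ne').div_const (sqrt y)).arctan.const_mul (2 / sqrt y)
  refine h.congr_deriv ?_
  field_simp
  rw [sq_sqrt hx.le, sq_sqrt hy.le]
  ring

theorem integral_one_div_sqrt_mul_add {y : ℝ} (hy : 0 < y) {a b : ℝ} (ha : 0 < a) (hab : a ≤ b) :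
    ∫ x in a..b, 1 / (sqrt x * (x + y)) =
      2 / sqrt y * arctan (sqrt b / sqrt y) - 2 / sqrt y * arctan (sqrt a / sqrt y) := by
  have hpos : ∀ x ∈ Set.uIcc a b, 0 < x := fun x hx => ha.trans_le (Set.uIcc_of_le hab ▸ hx).1
  refine intervalIntegral.integral_eq_sub_of_hasDerivAt
    (fun x hx => hasDerivAt_arctan_sqrt_div (hpos x hx) hy) (ContinuousOn.intervalIntegrable ?_)
  exact continuousOn_const.div (by fun_prop) fun x hx =>
    (mul_pos (sqrt_pos.2 (hpos x hx)) (by linarith [hpos x hx])).ne'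

theorem sum_one_div_sqrt_mul_add_ge {a y : ℝ} (ha : 0 < a) (hy : 0 < y) (N : ℕ) :
    π / y - 2 / (sqrt y * sqrt (N + a)) - 2 * sqrt a / (y * sqrt y) ≤
      ∑ j ∈ range N, 1 / sqrt (j + a) * (1 / sqrt y) / (j + a + y) := by
  have hsy := sqrt_pos.2 hy
  have hsNa : 0 < sqrt (N + a) := sqrt_pos.2 (by positivity)
  have hanti : AntitoneOn (fun x => 1 / (sqrt x * (x + y))) (Set.Icc a (a + N)) := by
    intro x hx x' hx' hxx'
    have hx0 : 0 < x := ha.trans_le hx.1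
    exact one_div_le_one_div_of_le (mul_pos (sqrt_pos.2 hx0) (by linarith))
      (mul_le_mul (sqrt_le_sqrt hxx') (by linarith) (by linarith) (sqrt_nonneg _))
  have hint := hanti.integral_le_sum
  rw [integral_one_div_sqrt_mul_add hy ha (by linarith [N.cast_nonneg (α := ℝ)])] at hint
  have hupper : arctan (sqrt a / sqrt y) ≤ sqrt a / sqrt y := arctan_le_self (by positivity)
  have hlower : π / 2 - sqrt y / sqrt (N + a) ≤ arctan (sqrt (a + N) / sqrt y) := by
    simpa only [inv_div, add_comm a] using pi_div_two_sub_inv_le_arctan (div_pos hsNa hsy)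
  calc π / y - 2 / (sqrt y * sqrt (N + a)) - 2 * sqrt a / (y * sqrt y)
      = 1 / sqrt y * (2 / sqrt y * (π / 2 - sqrt y / sqrt (N + a))
          - 2 / sqrt y * (sqrt a / sqrt y)) := by
        obtain ⟨s, hs, rfl⟩ : ∃ s, 0 < s ∧ y = s ^ 2 := ⟨sqrt y, hsy, (sq_sqrt hy.le).symm⟩
        rw [sqrt_sq hs.le]
        field_simp
    _ ≤ 1 / sqrt y * (2 / sqrt y * arctan (sqrt (a + N) / sqrt y)
          - 2 / sqrt y * arctan (sqrt a / sqrt y)) := by gcongr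
    _ ≤ 1 / sqrt y * ∑ j ∈ range N, 1 / (sqrt (a + j) * (a + j + y)) := by gcongr
    _ = ∑ j ∈ range N, 1 / sqrt (j + a) * (1 / sqrt y) / (j + a + y) := by
        rw [mul_sum]
        refine sum_congr rfl fun j _ => ?_
        rw [add_comm a]
        field_simp

theorem sum_one_div_sqrt_le {a : ℝ} (ha : 1 ≤ a) (N : ℕ) :
    ∑ k ∈ range N, 1 / sqrt (k + a) ≤ 2 * sqrt (N + a - 1) := by
  induction N with
  | zero => simp
  | succ N ih =>
    rw [sum_range_succ, Nat.cast_succ, show (N : ℝ) + 1 + a - 1 = N + a by ring]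
    have hu : sqrt (N + a) ^ 2 = N + a := sq_sqrt (by positivity)
    have hv : sqrt (N + a - 1) ^ 2 = N + a - 1 := sq_sqrt (by linarith [N.cast_nonneg (α := ℝ)])
    have hu0 : 0 < sqrt (N + a) := sqrt_pos.2 (by positivity)
    have hvu : sqrt (N + a - 1) ≤ sqrt (N + a) := sqrt_le_sqrt (by linarith)
    have hstep : 2 * sqrt (N + a - 1) + 1 / sqrt (N + a) ≤ 2 * sqrt (N + a) := by
      rw [← sub_nonneg]
      have : 2 * sqrt (N + a) - (2 * sqrt (N + a - 1) + 1 / sqrt (N + a)) =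
          (sqrt (N + a) - sqrt (N + a - 1)) ^ 2 / sqrt (N + a) := by
        field_simp
        linear_combination hu - hv
      rw [this]
      positivity
    linarith

theorem summable_one_div_mul_sqrt {a : ℝ} (ha : 0 < a) :
    Summable fun k : ℕ => 1 / ((k + a) * sqrt (k + a)) := by
  refine ((Real.summable_one_div_nat_add_rpow a (3 / 2)).2 (by norm_num)).congr fun k => ?_
  have hk : 0 < (k : ℝ) + a := by positivity
  rw [abs_of_pos hk, show (3 / 2 : ℝ) = 1 + 1 / 2 by norm_num, rpow_add hk, rpow_one, sqrt_eq_rpow]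

theorem exists_le_sum_sum_one_div_sqrt {a : ℝ} (ha : 1 ≤ a) : ∃ B, ∀ N : ℕ,
    π * ∑ k ∈ range N, 1 / (k + a) - B ≤
      ∑ j ∈ range N, ∑ k ∈ range N, 1 / sqrt (j + a) * (1 / sqrt (k + a)) / (j + k + 2 * a) := by
  have ha0 : 0 < a := by linarith
  refine ⟨4 + 2 * sqrt a * ∑' k : ℕ, 1 / ((k + a) * sqrt (k + a)), fun N => ?_⟩
  have hsNa : 0 < sqrt (N + a) := sqrt_pos.2 (by positivity)
  have hcross : ∑ k ∈ range N, 2 / (sqrt (k + a) * sqrt (N + a)) ≤ 4 := by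
    calc ∑ k ∈ range N, 2 / (sqrt (k + a) * sqrt (N + a))
        = 2 / sqrt (N + a) * ∑ k ∈ range N, 1 / sqrt (k + a) := by
          rw [mul_sum]
          refine sum_congr rfl fun k _ => ?_
          field_simp
      _ ≤ 2 / sqrt (N + a) * (2 * sqrt (N + a)) := by
          gcongr
          exact (sum_one_div_sqrt_le ha N).trans (by gcongr; linarith)
      _ = 4 := by field_simp; ring
  have htail : ∑ k ∈ range N, 2 * sqrt a / ((k + a) * sqrt (k + a)) ≤
      2 * sqrt a * ∑' k : ℕ, 1 / ((k + a) * sqrt (k + a)) := by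
    simp only [← mul_one_div (2 * sqrt a), ← mul_sum]
    gcongr
    exact (summable_one_div_mul_sqrt ha0).sum_le_tsum _ fun k _ => by positivity
  calc π * ∑ k ∈ range N, 1 / (k + a) - (4 + 2 * sqrt a * ∑' k : ℕ, 1 / ((k + a) * sqrt (k + a)))
      ≤ ∑ k ∈ range N, (π / (k + a) - 2 / (sqrt (k + a) * sqrt (N + a))
          - 2 * sqrt a / ((k + a) * sqrt (k + a))) := by
        simp only [sum_sub_distrib, mul_sum, mul_one_div]
        linarith
    _ ≤ ∑ k ∈ range N, ∑ j ∈ range N, 1 / sqrt (j + a) * (1 / sqrt (k + a)) / (j + a + (k + a)) :=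
        sum_le_sum fun k _ => sum_one_div_sqrt_mul_add_ge ha0 (by positivity) N
    _ = ∑ j ∈ range N, ∑ k ∈ range N, 1 / sqrt (j + a) * (1 / sqrt (k + a)) / (j + k + 2 * a) := by
        rw [sum_comm]
        refine sum_congr rfl fun j _ => sum_congr rfl fun k _ => ?_
        ring_nf

theorem tsum_hilbertTerm_eq_sum {θ : ℝ} {ξ : ℕ → ℝ} {N : ℕ} (hξ : ∀ k, N ≤ k → ξ k = 0) :
    ∑' p, hilbertTerm θ ξ p = ∑ j ∈ range N, ∑ k ∈ range N, ξ j * ξ k / ((j : ℝ) + k + θ) := by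
  rw [tsum_eq_sum (s := range N ×ˢ range N), sum_range_product_hilbertTerm]
  intro p hp
  rw [mem_product, mem_range, mem_range, not_and_or, not_lt, not_lt] at hp
  rcases hp with h | h <;> simp [hilbertTerm, hξ _ h]

theorem tendsto_sum_one_div_add_atTop {a : ℝ} (ha : 0 < a) :
    Tendsto (fun N => ∑ k ∈ range N, 1 / ((k : ℝ) + a)) atTop atTop := by
  refine (not_summable_iff_tendsto_nat_atTop_of_nonneg fun k => by positivity).1 fun h => ?_
  refine absurd ((Real.summable_one_div_nat_add_rpow a 1).1 (h.congr fun k => ?_)) (lt_irrefl 1)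
  rw [rpow_one, abs_of_pos (by positivity)]

theorem exists_lt_tsum_hilbertTerm {θ : ℝ} (hθ : 0 < θ) {C : ℝ} (hC : C < π) :
    ∃ ξ : ℕ → ℝ, Summable (fun k => ξ k ^ 2) ∧ ξ ≠ 0 ∧
      C * ∑' k, ξ k ^ 2 < ∑' p, hilbertTerm θ ξ p := by
  set a := θ + 1
  have ha : 1 ≤ a := by linarith
  obtain ⟨B, hB⟩ := exists_le_sum_sum_one_div_sqrt ha
  have hS := tendsto_sum_one_div_add_atTop (a := a) (by positivity)
  obtain ⟨N, hNB, hN⟩ :=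
    ((hS.eventually_gt_atTop (B / (π - C))).and (eventually_ge_atTop 1)).exists
  set ξ : ℕ → ℝ := fun k => if k < N then 1 / sqrt (k + a) else 0
  have hξ : ∀ k, N ≤ k → ξ k = 0 := fun k hk => if_neg (not_lt.2 hk)
  have hsq : ∀ k ∉ range N, ξ k ^ 2 = 0 := fun k hk => by
    rw [hξ k (not_lt.1 (mem_range.not.1 hk)), sq, zero_mul]
  have hnorm : ∑' k, ξ k ^ 2 = ∑ k ∈ range N, 1 / ((k : ℝ) + a) := by
    rw [tsum_eq_sum hsq]
    refine sum_congr rfl fun k hk => ?_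
    have hka : 0 ≤ (k : ℝ) + a := by positivity
    simp only [ξ, if_pos (mem_range.1 hk), div_pow, one_pow, sq_sqrt hka]
  have hform : ∑ j ∈ range N, ∑ k ∈ range N, 1 / sqrt (j + a) * (1 / sqrt (k + a)) / (j + k + 2 * a)
      ≤ ∑' p, hilbertTerm θ ξ p := by
    rw [tsum_hilbertTerm_eq_sum hξ]
    refine sum_le_sum fun j hj => sum_le_sum fun k hk => ?_
    simp only [ξ, if_pos (mem_range.1 hj), if_pos (mem_range.1 hk)]
    exact div_le_div_of_nonneg_left (by positivity) (by positivity) (by linarith)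
  refine ⟨ξ, summable_of_ne_finset_zero hsq, fun h => ?_, ?_⟩
  · have h0 : ξ 0 = 0 := congr_fun h 0
    simp only [ξ, if_pos (show 0 < N by omega)] at h0
    exact absurd h0 (by positivity)
  · rw [hnorm]
    have := (div_lt_iff₀ (sub_pos.2 hC)).1 hNB
    linarith [hB N]

/-- Hilbert's double series inequality for the generalized Hilbert matrix, `θ ≥ 1/2`:
the bound `π` holds and is best possible. -/
theorem hilbert_inequality (θ : ℝ) (hθ : 1 / 2 ≤ θ) :
    (∀ ξ : ℕ → ℝ, Summable (fun k => ξ k ^ 2) →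
      Summable (fun p : ℕ × ℕ => ξ p.1 * ξ p.2 / ((p.1 : ℝ) + p.2 + θ)) ∧
      0 ≤ ∑' p : ℕ × ℕ, ξ p.1 * ξ p.2 / ((p.1 : ℝ) + p.2 + θ) ∧
      ∑' p : ℕ × ℕ, ξ p.1 * ξ p.2 / ((p.1 : ℝ) + p.2 + θ) ≤ Real.pi * ∑' k : ℕ, ξ k ^ 2) ∧
    ∀ C : ℝ, C < Real.pi → ∃ ξ : ℕ → ℝ, Summable (fun k => ξ k ^ 2) ∧ ξ ≠ 0 ∧
      C * ∑' k : ℕ, ξ k ^ 2 < ∑' p : ℕ × ℕ, ξ p.1 * ξ p.2 / ((p.1 : ℝ) + p.2 + θ) := by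
  have hθ₀ : 0 < θ := by linarith
  refine ⟨fun ξ hξ => ?_, fun C hC => exists_lt_tsum_hilbertTerm hθ₀ hC⟩
  obtain ⟨hsum, hle⟩ := summable_hilbertTerm_and_tsum_le hθ hξ
  exact ⟨hsum, tsum_hilbertTerm_nonneg hθ₀ hsum, hle⟩
end
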